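/- Let G be a finite simple graph containing pairwise edge-disjoint cliques K_{s₁}, K_{s₂}, ..., K_{s_t} with each s_i ≥ 3. Then at least Σ_{i=1}^{t} C(s_i,3)/(1 + 3(s_i - 3)) of the H-eigenvalues of G (counted with multiplicity) are greater than or equal to 3, where C(s,3) = s(s-1)(s-2)/6. In particular, if ω ≥ 3 is the clique number of G, then G has at least C(ω,3)/(1 + 3(ω - 3)) H-eigenvalues not less than 3. -/

import Mathlib

open scoped Classical
open scoped Matrix

namespace HelmPaper

variable {V : Type} [Fintype V] [DecidableEq V]

/-- The set of triangles of `G`, i.e. the 3-element cliques of `G`. -/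
abbrev Triangle (G : SimpleGraph V) : Type :=
  {s : Finset V // s.card = 3 ∧ G.IsClique (s : Set V)}

/-- An orientation of the edges of `G`: each edge `e` gets a head `e⁺` and a tail `e⁻`. -/
structure Orientation (G : SimpleGraph V) where
  head : G.edgeSet → V
  tail : G.edgeSet → V
  consistent : ∀ e : G.edgeSet, (e : Sym2 V) = s(head e, tail e)

/-- A cyclic orientation of each triangle of `G`, recorded by a representative ordered
triple of its three vertices. -/
structure TriOrientation (G : SimpleGraph V) where
  fst : Triangle G → V
  snd : Triangle G → V
  trd : Triangle G → V
  consistent : ∀ t : Triangle G, ({fst t, snd t, trd t} : Finset V) = t.val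

/-- The edge-vertex incidence matrix `B`. -/
noncomputable def bMat (G : SimpleGraph V) (o : Orientation G) : Matrix G.edgeSet V ℝ :=
  fun e v => if v = o.head e then 1 else if v = o.tail e then -1 else 0

/-- The oriented edge `e` agrees with the cyclic orientation of the triangle `t`. -/
def Agrees {G : SimpleGraph V} (o : Orientation G) (τ : TriOrientation G)
    (e : G.edgeSet) (t : Triangle G) : Prop :=
  (o.tail e = τ.fst t ∧ o.head e = τ.snd t) ∨
  (o.tail e = τ.snd t ∧ o.head e = τ.trd t) ∨
  (o.tail e = τ.trd t ∧ o.head e = τ.fst t)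

/-- The oriented edge `e` disagrees with the cyclic orientation of the triangle `t`. -/
def Disagrees {G : SimpleGraph V} (o : Orientation G) (τ : TriOrientation G)
    (e : G.edgeSet) (t : Triangle G) : Prop :=
  (o.head e = τ.fst t ∧ o.tail e = τ.snd t) ∨
  (o.head e = τ.snd t ∧ o.tail e = τ.trd t) ∨
  (o.head e = τ.trd t ∧ o.tail e = τ.fst t)

/-- The triangle-edge incidence matrix `C`. -/
noncomputable def cMat (G : SimpleGraph V) (o : Orientation G) (τ : TriOrientation G) :
    Matrix (Triangle G) G.edgeSet ℝ :=
  fun t e => if Agrees o τ e t then 1 else if Disagrees o τ e t then -1 else 0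

/-- The Helmholtzian matrix `H(G) = B Bᵀ + Cᵀ C`. -/
noncomputable def helm (G : SimpleGraph V) (o : Orientation G) (τ : TriOrientation G) :
    Matrix G.edgeSet G.edgeSet ℝ :=
  bMat G o * (bMat G o)ᵀ + (cMat G o τ)ᵀ * cMat G o τ

/-- The edge `e` (as an unordered pair of vertices) lies in the triangle `t`. -/
def EdgeInTri (G : SimpleGraph V) (e : Sym2 V) (t : Triangle G) : Prop :=
  ∀ v ∈ e, v ∈ t.val

/-- The triangle degree `△(e)`: the number of triangles of `G` containing the edge `e`. -/
noncomputable def triDeg (G : SimpleGraph V) (e : Sym2 V) : ℕ :=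
  (Finset.univ.filter fun t : Triangle G => EdgeInTri G e t).card

end HelmPaper

/-!
The rows of `C` indexed by pairwise edge-disjoint triangles are orthogonal of squared norm `3`, so
on their span `x ⬝ H x ≥ ‖C x‖² ≥ 3 ‖x‖²`. This span meets the span of the eigenvectors of
eigenvalues `< 3` only in `0`, so `H` has at least as many eigenvalues `≥ 3` as there are such
triangles. A triangle of `K_s` shares an edge with exactly `3 (s - 3)` others, so choosing
triangles of `K_s` greedily, each choice discarding at most `1 + 3 (s - 3)` candidates, yields
`C(s,3) / (1 + 3 (s - 3))` edge-disjoint ones; triangles from edge-disjoint cliques are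
edge-disjoint.
-/

open Finset

namespace Matrix.IsHermitian

variable {n : Type*} [Fintype n] [DecidableEq n] {A : Matrix n n ℝ}

theorem card_filter_roots_charpoly (hA : A.IsHermitian) (p : ℝ → Prop) [DecidablePred p] :
    Multiset.card (A.charpoly.roots.filter p) = #{i | p (hA.eigenvalues i)} := by
  rw [hA.roots_charpoly_eq_eigenvalues, Multiset.filter_map, Multiset.card_map]
  rfl

theorem dotProduct_eq_sum_eigenvectorBasis (hA : A.IsHermitian) (x y : n → ℝ) :
    x ⬝ᵥ y = ∑ i, (⇑(hA.eigenvectorBasis i) ⬝ᵥ x) * (⇑(hA.eigenvectorBasis i) ⬝ᵥ y) := by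
  have := hA.eigenvectorBasis.sum_inner_mul_inner (WithLp.toLp 2 y) (WithLp.toLp 2 x)
  simp only [EuclideanSpace.inner_eq_star_dotProduct, star_trivial] at this
  simp [← this, dotProduct_comm, mul_comm]

theorem eigenvectorBasis_dotProduct_mulVec (hA : A.IsHermitian) (i : n) (x : n → ℝ) :
    ⇑(hA.eigenvectorBasis i) ⬝ᵥ (A *ᵥ x) = hA.eigenvalues i * (⇑(hA.eigenvectorBasis i) ⬝ᵥ x) := by
  rw [dotProduct_mulVec, ← mulVec_transpose, ← conjTranspose_eq_transpose_of_trivial, hA.eq,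
    hA.mulVec_eigenvectorBasis, smul_dotProduct, smul_eq_mul]

theorem dotProduct_mulVec_sub_mul_dotProduct_eq_sum (hA : A.IsHermitian) (c : ℝ) (x : n → ℝ) :
    x ⬝ᵥ (A *ᵥ x) - c * (x ⬝ᵥ x) =
      ∑ i, (hA.eigenvalues i - c) * (⇑(hA.eigenvectorBasis i) ⬝ᵥ x) ^ 2 := by
  simp only [hA.dotProduct_eq_sum_eigenvectorBasis x, eigenvectorBasis_dotProduct_mulVec,
    mul_sum, ← sum_sub_distrib]
  exact sum_congr rfl fun i _ => by ring

theorem finrank_le_card_le_eigenvalues (hA : A.IsHermitian) {c : ℝ} (W : Submodule ℝ (n → ℝ))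
    (hW : ∀ x ∈ W, c * (x ⬝ᵥ x) ≤ x ⬝ᵥ (A *ᵥ x)) :
    Module.finrank ℝ W ≤ #{i | c ≤ hA.eigenvalues i} := by
  let coeff : W →ₗ[ℝ] {i // c ≤ hA.eigenvalues i} → ℝ :=
    { toFun := fun x i => ⇑(hA.eigenvectorBasis i) ⬝ᵥ x
      map_add' := fun x y => by ext; simp [dotProduct_add]
      map_smul' := fun r x => by ext; simp [dotProduct_smul] }
  suffices Function.Injective coeff by
    simpa [Fintype.card_subtype] using coeff.finrank_le_finrank_of_injective this
  rw [← LinearMap.ker_eq_bot, Submodule.eq_bot_iff]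
  rintro ⟨x, hxW⟩ hx
  have hlarge (i) (hi : c ≤ hA.eigenvalues i) : ⇑(hA.eigenvectorBasis i) ⬝ᵥ x = 0 :=
    congrFun hx ⟨i, hi⟩
  have hnonpos : ∀ i ∈ univ, (hA.eigenvalues i - c) * (⇑(hA.eigenvectorBasis i) ⬝ᵥ x) ^ 2 ≤ 0 := by
    intro i _
    rcases le_or_gt c (hA.eigenvalues i) with hi | hi
    · simp [hlarge i hi]
    · exact mul_nonpos_of_nonpos_of_nonneg (by linarith) (sq_nonneg _)
  have hzero := (sum_eq_zero_iff_of_nonpos hnonpos).mp <| le_antisymm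
    (sum_nonpos hnonpos)
    (by linarith [hA.dotProduct_mulVec_sub_mul_dotProduct_eq_sum c x, hW x hxW])
  have hcoeff (i) : ⇑(hA.eigenvectorBasis i) ⬝ᵥ x = 0 := by
    rcases le_or_gt c (hA.eigenvalues i) with hi | hi
    · exact hlarge i hi
    · simpa [sub_eq_zero, hi.ne] using hzero i (mem_univ i)
  have : x ⬝ᵥ x = 0 := by simp [hA.dotProduct_eq_sum_eigenvectorBasis x x, hcoeff]
  simpa using dotProduct_self_eq_zero.mp this

end Matrix.IsHermitian

section OrthogonalFamily

variable {R ι n : Type*} [Field R] [Fintype ι] [DecidableEq ι] [Fintype n]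
  {w : ι → n → R} {c : R}

theorem dotProduct_linearCombination_of_orthogonal
    (hw : ∀ i j, w i ⬝ᵥ w j = if i = j then c else 0) (a : ι → R) (j : ι) :
    w j ⬝ᵥ Fintype.linearCombination R w a = c * a j := by
  simp [Fintype.linearCombination_apply, dotProduct_sum, dotProduct_smul, hw, mul_comm]

theorem linearCombination_injective_of_orthogonal
    (hw : ∀ i j, w i ⬝ᵥ w j = if i = j then c else 0) (hc : c ≠ 0) :
    Function.Injective (Fintype.linearCombination R w) := by
  rw [← LinearMap.ker_eq_bot, Submodule.eq_bot_iff]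
  intro a ha
  funext j
  have h : c * a j = 0 := by
    rw [← dotProduct_linearCombination_of_orthogonal hw, LinearMap.mem_ker.mp ha, dotProduct_zero]
  exact (mul_eq_zero.mp h).resolve_left hc

theorem mul_dotProduct_self_of_mem_range_linearCombination
    (hw : ∀ i j, w i ⬝ᵥ w j = if i = j then c else 0) {x : n → R}
    (hx : x ∈ LinearMap.range (Fintype.linearCombination R w)) :
    c * (x ⬝ᵥ x) = ∑ i, (w i ⬝ᵥ x) ^ 2 := by
  obtain ⟨a, rfl⟩ := hx
  have hself : Fintype.linearCombination R w a ⬝ᵥ Fintype.linearCombination R w a =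
      ∑ i, a i * (c * a i) := by
    nth_rewrite 1 [Fintype.linearCombination_apply]
    simp only [sum_dotProduct, smul_dotProduct, smul_eq_mul,
      dotProduct_linearCombination_of_orthogonal hw]
  rw [hself, mul_sum]
  simp only [dotProduct_linearCombination_of_orthogonal hw]
  exact sum_congr rfl fun i _ => by ring

end OrthogonalFamily

theorem Matrix.dotProduct_transpose_mul_self_mulVec {R m n : Type*} [CommSemiring R] [Fintype m]
    [Fintype n] (N : Matrix m n R) (x : n → R) :
    x ⬝ᵥ ((Nᵀ * N) *ᵥ x) = ∑ i, (N i ⬝ᵥ x) ^ 2 := by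
  rw [← Matrix.mulVec_mulVec, Matrix.dotProduct_mulVec, Matrix.vecMul_transpose]
  simp [dotProduct, Matrix.mulVec, sq]

theorem SimpleGraph.exists_isIndepSet_card_le_mul {α : Type*} [DecidableEq α] (H : SimpleGraph α)
    [DecidableRel H.Adj] (D : ℕ) (T : Finset α) (hT : ∀ s ∈ T, #{s' ∈ T | H.Adj s s'} ≤ D) :
    ∃ F ⊆ T, H.IsIndepSet (F : Set α) ∧ #T ≤ #F * (D + 1) := by
  induction T using Finset.strongInduction with
  | H T ih =>
  obtain rfl | ⟨s, hs⟩ := T.eq_empty_or_nonempty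
  · exact ⟨∅, empty_subset _, by simp, by simp⟩
  set T' := (T.erase s).filter fun s' => ¬H.Adj s s'
  have hT'T : T' ⊂ T := (filter_subset _ _).trans_ssubset (erase_ssubset hs)
  obtain ⟨F, hFT', hF, hcard⟩ := ih T' hT'T fun u hu =>
    (card_le_card (filter_subset_filter _ hT'T.subset)).trans (hT u (hT'T.subset hu))
  have hsF : ∀ u ∈ F, s ≠ u ∧ ¬H.Adj s u := fun u hu => by
    have := hFT' hu
    simp only [T', mem_filter, mem_erase] at this
    exact ⟨this.1.1.symm, this.2⟩
  refine ⟨insert s F, insert_subset hs (hFT'.trans hT'T.subset), ?_, ?_⟩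
  · rw [coe_insert]
    exact hF.insert fun u hu _ => ⟨(hsF u hu).2, fun h => (hsF u hu).2 h.symm⟩
  · have hsplit : #T ≤ #T' + (D + 1) := by
      have : #{s' ∈ T.erase s | H.Adj s s'} + #T' = #(T.erase s) :=
        card_filter_add_card_filter_not _
      have := card_le_card (filter_subset_filter (fun s' => H.Adj s s') (erase_subset s T))
      have := card_erase_add_one hs
      have := hT s hs
      omega
    rw [card_insert_of_notMem fun h => (hsF s h).1 rfl, add_one_mul]
    omega

section Packing

variable {V : Type*} [DecidableEq V]

theorem Finset.exists_eq_insert_erase_of_card_inter {s u : Finset V} (hs : #s = #(s ∩ u) + 1)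
    (hu : #u = #(s ∩ u) + 1) : ∃ a ∈ s, ∃ b ∈ u \ s, u = insert b (s.erase a) := by
  obtain ⟨a, ha⟩ := card_eq_one.mp (show #(s \ u) = 1 by grind)
  obtain ⟨b, hb⟩ := card_eq_one.mp (show #(u \ s) = 1 by grind)
  refine ⟨a, (mem_sdiff.mp (ha ▸ mem_singleton_self a)).1, b, hb ▸ mem_singleton_self b, ?_⟩
  ext x
  have hxa := congrArg (x ∈ ·) ha
  have hxb := congrArg (x ∈ ·) hb
  simp only [mem_sdiff, mem_singleton, eq_iff_iff] at hxa hxb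
  simp only [mem_insert, mem_erase]
  grind

theorem Finset.card_filter_two_le_card_inter_le {K s : Finset V} (hsK : s ⊆ K) (hs : #s = 3) :
    #{u ∈ K.powersetCard 3 | s ≠ u ∧ 2 ≤ #(s ∩ u)} ≤ 3 * (#K - 3) := by
  calc #{u ∈ K.powersetCard 3 | s ≠ u ∧ 2 ≤ #(s ∩ u)}
      ≤ #((s ×ˢ (K \ s)).image fun p => insert p.2 (s.erase p.1)) := by
        refine card_le_card fun u hu => ?_
        simp only [mem_filter, mem_powersetCard] at hu
        obtain ⟨⟨huK, hu3⟩, hne, h2⟩ := hu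
        have hle : #(s ∩ u) ≤ 2 := by
          by_contra! h
          exact hne (eq_of_subset_of_card_le (inter_eq_left.mp (eq_of_subset_of_card_le
            inter_subset_left (by omega))) (by omega))
        obtain ⟨a, ha, b, hb, rfl⟩ := exists_eq_insert_erase_of_card_inter (s := s) (u := u)
          (by omega) (by omega)
        simp only [mem_image, mem_product, Prod.exists]
        exact ⟨a, b, ⟨ha, sdiff_subset_sdiff huK le_rfl hb⟩, rfl⟩
    _ ≤ #s * #(K \ s) := card_image_le.trans (card_product _ _).le
    _ = 3 * (#K - 3) := by rw [card_sdiff_of_subset hsK, hs]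

theorem Finset.exists_packing_powersetCard_three (K : Finset V) :
    ∃ F ⊆ K.powersetCard 3, (F : Set (Finset V)).Pairwise (fun s u => #(s ∩ u) ≤ 1) ∧
      (#K).choose 3 ≤ #F * (3 * (#K - 3) + 1) := by
  let H := SimpleGraph.fromRel fun s u : Finset V => 2 ≤ #(s ∩ u)
  obtain ⟨F, hFK, hF, hcard⟩ := H.exists_isIndepSet_card_le_mul (3 * (#K - 3)) (K.powersetCard 3)
    fun s hs => by
      rw [mem_powersetCard] at hs
      simpa [H, inter_comm] using card_filter_two_le_card_inter_le hs.1 hs.2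
  refine ⟨F, hFK, fun s hs u hu hsu => ?_, by rwa [card_powersetCard] at hcard⟩
  have := hF hs hu hsu
  simp only [H, SimpleGraph.fromRel_adj, not_and, not_or, not_le] at this
  exact Nat.le_of_lt_succ (this hsu).1

theorem div_one_add_three_mul_sub_three_le {a f k : ℕ} (hk : 3 ≤ k)
    (h : a ≤ f * (3 * (k - 3) + 1)) : (a : ℝ) / (1 + 3 * ((k : ℝ) - 3)) ≤ f := by
  have hk' : (3 : ℝ) ≤ k := by exact_mod_cast hk
  rw [div_le_iff₀ (by linarith)]
  calc (a : ℝ) ≤ ((f * (3 * (k - 3) + 1) : ℕ) : ℝ) := by exact_mod_cast h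
    _ = f * (1 + 3 * ((k : ℝ) - 3)) := by
      push_cast [Nat.cast_sub hk]
      ring

end Packing

namespace HelmPaper

section Incidence

variable {V : Type} {G : SimpleGraph V}

theorem Orientation.head_ne_tail (o : Orientation G) (e : G.edgeSet) : o.head e ≠ o.tail e := by
  have he := e.2
  rw [o.consistent e, SimpleGraph.mem_edgeSet] at he
  exact he.ne

theorem Orientation.edgeInTri_iff (o : Orientation G) (e : G.edgeSet) (t : Triangle G) :
    EdgeInTri G e t ↔ o.head e ∈ t.val ∧ o.tail e ∈ t.val := by
  simp [EdgeInTri, o.consistent e]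

variable [DecidableEq V]

theorem TriOrientation.mem_iff (τ : TriOrientation G) (t : Triangle G) {v : V} :
    v ∈ t.val ↔ v = τ.fst t ∨ v = τ.snd t ∨ v = τ.trd t := by
  rw [← τ.consistent t]; simp

variable {o : Orientation G} {τ : TriOrientation G}

theorem agrees_or_disagrees_iff (e : G.edgeSet) (t : Triangle G) :
    Agrees o τ e t ∨ Disagrees o τ e t ↔ EdgeInTri G e t := by
  rw [o.edgeInTri_iff, τ.mem_iff, τ.mem_iff]
  have := o.head_ne_tail e
  unfold Agrees Disagrees
  grind

theorem cMat_eq_zero {e : G.edgeSet} {t : Triangle G} (h : ¬EdgeInTri G e t) :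
    cMat G o τ t e = 0 := by
  rw [← agrees_or_disagrees_iff (o := o) (τ := τ), not_or] at h
  simp [cMat, h.1, h.2]

theorem cMat_mul_self (e : G.edgeSet) (t : Triangle G) :
    cMat G o τ t e * cMat G o τ t e = if EdgeInTri G e t then 1 else 0 := by
  split_ifs with h
  · by_cases hA : Agrees o τ e t
    · simp [cMat, hA]
    · have hD := ((agrees_or_disagrees_iff e t).mpr h).resolve_left hA
      simp [cMat, hA, hD]
  · simp [cMat_eq_zero h]

variable [Fintype V]

theorem card_edgeInTri (t : Triangle G) : #{e : G.edgeSet | EdgeInTri G e t} = 3 := by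
  have h1 : #{e : G.edgeSet | EdgeInTri G e t} = #{e ∈ G.edgeFinset | e.toFinset ⊆ t.val} := by
    refine card_bij (fun e _ => e.1) (fun e he => ?_) (fun a _ b _ h => Subtype.ext h) ?_
    · simp only [mem_filter_univ] at he
      simpa [EdgeInTri, subset_iff] using he
    · intro z hz
      simp only [mem_filter, SimpleGraph.mem_edgeFinset] at hz
      refine ⟨⟨z, hz.1⟩, ?_, rfl⟩
      simp only [mem_filter_univ]
      simpa [EdgeInTri, subset_iff] using hz.2
  rw [h1, SimpleGraph.card_filter_edgeFinset_toFinset_subset]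
  convert SimpleGraph.card_edgeFinset_top_eq_card_choose_two (V := ((t.val : Set V) : Type))
  · exact SimpleGraph.induce_eq_top.mpr t.2.2
  · simp [t.2.1]

theorem cMat_dotProduct_self (t : Triangle G) : cMat G o τ t ⬝ᵥ cMat G o τ t = 3 := by
  simp only [dotProduct, cMat_mul_self, sum_boole, card_edgeInTri, Nat.cast_ofNat]

theorem cMat_dotProduct_eq_zero {t t' : Triangle G} (h : #(t.val ∩ t'.val) ≤ 1) :
    cMat G o τ t ⬝ᵥ cMat G o τ t' = 0 := by
  refine sum_eq_zero fun e _ => ?_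
  by_cases ht : EdgeInTri G e t
  · by_cases ht' : EdgeInTri G e t'
    · rw [o.edgeInTri_iff] at ht ht'
      have : #{o.head e, o.tail e} ≤ #(t.val ∩ t'.val) :=
        card_le_card (by simp [insert_subset_iff, ht, ht'])
      rw [card_pair (o.head_ne_tail e)] at this
      omega
    · rw [cMat_eq_zero ht', mul_zero]
  · rw [cMat_eq_zero ht, zero_mul]

end Incidence

section TrianglePacking

variable {V : Type} [DecidableEq V] {G : SimpleGraph V}

def IsTrianglePacking (P : Finset (Triangle G)) : Prop :=
  (P : Set (Triangle G)).Pairwise fun t t' => #(t.val ∩ t'.val) ≤ 1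

theorem exists_isTrianglePacking_of_edgeDisjoint_cliques {ι : Type*} [Fintype ι]
    (K : ι → Finset V) (hK : ∀ i, G.IsClique (K i : Set V)) (h3 : ∀ i, 3 ≤ #(K i))
    (hdisj : ∀ i j, i ≠ j → ∀ a b : V, G.Adj a b →
      ¬(a ∈ K i ∧ b ∈ K i ∧ a ∈ K j ∧ b ∈ K j)) :
    ∃ P : Finset (Triangle G), IsTrianglePacking P ∧
      ∑ i, ((#(K i)).choose 3 : ℝ) / (1 + 3 * ((#(K i) : ℝ) - 3)) ≤ #P := by
  choose F hFK hF hcard using fun i => (K i).exists_packing_powersetCard_three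
  have hmem (i) (s) (hs : s ∈ F i) : s ⊆ K i ∧ #s = 3 := mem_powersetCard.mp (hFK i hs)
  have hcross (i j) (hij : i ≠ j) (s u : Finset V) (hs : s ⊆ K i) (hu : u ⊆ K j) :
      #(s ∩ u) ≤ 1 := by
    by_contra! h
    obtain ⟨a, ha, b, hb, hab⟩ := one_lt_card.mp h
    rw [mem_inter] at ha hb
    exact hdisj i j hij a b (hK i (hs ha.1) (hs hb.1) hab) ⟨hs ha.1, hs hb.1, hu ha.2, hu hb.2⟩
  set T := univ.biUnion F
  have hT : ∀ s ∈ T, #s = 3 ∧ G.IsClique (s : Set V) := fun s hs => by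
    obtain ⟨i, -, hi⟩ := mem_biUnion.mp hs
    exact ⟨(hmem i s hi).2, (hK i).subset (coe_subset.mpr (hmem i s hi).1)⟩
  have hTpair : (T : Set (Finset V)).Pairwise fun s u => #(s ∩ u) ≤ 1 := by
    intro s hs u hu hsu
    obtain ⟨i, -, hi⟩ := mem_biUnion.mp hs
    obtain ⟨j, -, hj⟩ := mem_biUnion.mp hu
    obtain rfl | hij := eq_or_ne i j
    · exact hF i hi hj hsu
    · exact hcross i j hij s u (hmem i s hi).1 (hmem j u hj).1
  have hTcard : #T = ∑ i, #(F i) := card_biUnion fun i _ j _ hij =>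
    disjoint_left.mpr fun s hi hj => by
      have := hcross i j hij s s (hmem i s hi).1 (hmem j s hj).1
      rw [inter_self, (hmem i s hi).2] at this
      omega
  refine ⟨T.subtype _, fun t ht t' ht' htt' => hTpair (mem_subtype.mp ht) (mem_subtype.mp ht')
    fun h => htt' (Subtype.ext h), ?_⟩
  rw [card_subtype, filter_true_of_mem hT, hTcard, Nat.cast_sum]
  exact sum_le_sum fun i _ => div_one_add_three_mul_sub_three_le (h3 i) (hcard i)

end TrianglePacking

variable {V : Type} [Fintype V] [DecidableEq V]

theorem helm_isHermitian (G : SimpleGraph V) (o : Orientation G) (τ : TriOrientation G) :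
    (helm G o τ).IsHermitian := by
  have h := (Matrix.isHermitian_mul_conjTranspose_self (bMat G o)).add
    (Matrix.isHermitian_conjTranspose_mul_self (cMat G o τ))
  simpa only [helm, Matrix.conjTranspose_eq_transpose_of_trivial] using h

theorem dotProduct_helm_mulVec (G : SimpleGraph V) (o : Orientation G) (τ : TriOrientation G)
    (x : G.edgeSet → ℝ) :
    x ⬝ᵥ (helm G o τ *ᵥ x) = ∑ v, ((bMat G o)ᵀ v ⬝ᵥ x) ^ 2 + ∑ t, (cMat G o τ t ⬝ᵥ x) ^ 2 := by
  rw [helm, Matrix.add_mulVec, dotProduct_add, ← Matrix.dotProduct_transpose_mul_self_mulVec,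
    ← Matrix.dotProduct_transpose_mul_self_mulVec, Matrix.transpose_transpose]

theorem IsTrianglePacking.card_le_card_three_le_eigenvalues_helm {G : SimpleGraph V}
    {P : Finset (Triangle G)} (hP : IsTrianglePacking P) (o : Orientation G)
    (τ : TriOrientation G) :
    #P ≤ #{i | 3 ≤ (helm_isHermitian G o τ).eigenvalues i} := by
  let w : P → G.edgeSet → ℝ := fun t => cMat G o τ t
  have hw (t t' : P) : w t ⬝ᵥ w t' = if t = t' then 3 else 0 := by
    split_ifs with h
    · rw [h]
      exact cMat_dotProduct_self _
    · exact cMat_dotProduct_eq_zero (hP t.2 t'.2 (Subtype.coe_ne_coe.mpr h))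
  have hrange : Module.finrank ℝ (LinearMap.range (Fintype.linearCombination ℝ w)) = #P := by
    rw [LinearMap.finrank_range_of_inj (linearCombination_injective_of_orthogonal hw three_ne_zero)]
    simp
  rw [← hrange]
  refine (helm_isHermitian G o τ).finrank_le_card_le_eigenvalues _ fun x hx => ?_
  rw [mul_dotProduct_self_of_mem_range_linearCombination hw hx, dotProduct_helm_mulVec]
  calc ∑ t : P, (w t ⬝ᵥ x) ^ 2 = ∑ t ∈ P, (cMat G o τ t ⬝ᵥ x) ^ 2 :=
      sum_coe_sort P fun t => (cMat G o τ t ⬝ᵥ x) ^ 2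
    _ ≤ ∑ t, (cMat G o τ t ⬝ᵥ x) ^ 2 :=
      sum_le_sum_of_subset_of_nonneg (subset_univ P) fun _ _ _ => sq_nonneg _
    _ ≤ _ := le_add_of_nonneg_left (sum_nonneg fun _ _ => sq_nonneg _)

theorem sum_choose_div_le_card_roots_helm {ι : Type*} [Fintype ι] (G : SimpleGraph V)
    (o : Orientation G) (τ : TriOrientation G) (K : ι → Finset V)
    (hK : ∀ i, G.IsClique (K i : Set V)) (h3 : ∀ i, 3 ≤ #(K i))
    (hdisj : ∀ i j, i ≠ j → ∀ a b : V, G.Adj a b →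
      ¬(a ∈ K i ∧ b ∈ K i ∧ a ∈ K j ∧ b ∈ K j)) :
    ∑ i, ((#(K i)).choose 3 : ℝ) / (1 + 3 * ((#(K i) : ℝ) - 3)) ≤
      (((helm G o τ).charpoly.roots.filter fun x => 3 ≤ x).card : ℝ) := by
  obtain ⟨P, hP, hsum⟩ := exists_isTrianglePacking_of_edgeDisjoint_cliques K hK h3 hdisj
  rw [(helm_isHermitian G o τ).card_filter_roots_charpoly]
  exact hsum.trans (by exact_mod_cast hP.card_le_card_three_le_eigenvalues_helm o τ)

/-- If `G` contains pairwise edge-disjoint cliques `K_{s₁}, …, K_{s_t}`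
with each `sᵢ ≥ 3`, then at least `Σᵢ C(sᵢ,3)/(1 + 3(sᵢ - 3))` of the `H`-eigenvalues of
`G` (with multiplicity) are at least `3`. In particular, if `ω ≥ 3` is the clique number
of `G`, then at least `C(ω,3)/(1 + 3(ω - 3))` of the `H`-eigenvalues are at least `3`. -/
theorem statement19 (G : SimpleGraph V) (o : Orientation G) (τ : TriOrientation G) :
    (∀ (t : ℕ) (K : Fin t → Finset V),
      (∀ i, G.IsClique (K i)) → (∀ i, 3 ≤ (K i).card) →
      (∀ i j, i ≠ j → ∀ a b : V, G.Adj a b →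
        ¬(a ∈ K i ∧ b ∈ K i ∧ a ∈ K j ∧ b ∈ K j)) →
      (∑ i, ((K i).card.choose 3 : ℝ) / (1 + 3 * (((K i).card : ℝ) - 3))) ≤
        (((helm G o τ).charpoly.roots.filter fun x => 3 ≤ x).card : ℝ)) ∧
    (∀ ω : ℕ, IsGreatest {n : ℕ | ∃ K : Finset V, G.IsNClique n K} ω → 3 ≤ ω →
      (ω.choose 3 : ℝ) / (1 + 3 * ((ω : ℝ) - 3)) ≤
        (((helm G o τ).charpoly.roots.filter fun x => 3 ≤ x).card : ℝ)) := by
  refine ⟨fun t K => sum_choose_div_le_card_roots_helm G o τ K, fun ω hω h3 => ?_⟩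
  obtain ⟨K, hK⟩ := hω.1
  simpa [hK.card_eq] using sum_choose_div_le_card_roots_helm G o τ (fun _ : Unit => K)
    (fun _ => hK.isClique) (fun _ => hK.card_eq ▸ h3)
    fun i j hij => absurd (Subsingleton.elim i j) hij

end HelmPaper
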